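/- Let $D := S_\kappa \cap [\ell,u] \subset \mathbb{R}^n$ with $0 \in [\ell_i,u_i]$ for all $i$, and let $w \in \mathbb{R}^n$. Then $y \in \Pi_D(w)$ (i.e., $y$ minimizes $\|z-w\|$ over $z \in D$) if and only if there exists an index set $I \subset \{1,\ldots,n\}$ with $|I| = \kappa$ such that $d_i(w) \ge d_j(w)$ for all $i \in I$ and $j \notin I$, and $y = p^I(w)$. -/

import Mathlib

/-!
If `z ∈ D` vanishes off a set `J` with `|J| = κ`, the projection inequality on each interval
gives `‖z - w‖² ≥ ‖w‖² - ∑_{i ∈ J} d_i(w) + ‖z - p^J(w)‖²`, while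
`‖p^J(w) - w‖² = ‖w‖² - ∑_{i ∈ J} d_i(w)`.
Hence minimizing over `D` means maximizing `∑_{i ∈ J} d_i(w)` over `κ`-sets `J`, whose maximizers
are, by an exchange argument, the sets carrying `κ` largest values of `d(w)`; and a minimizer
supported in `J` must equal `p^J(w)`.
-/

/-- Projection of a real number onto the interval `[l, u]`. -/
noncomputable def projInt (l u t : ℝ) : ℝ := max l (min t u)

/-- The number of nonzero components of a vector. -/
noncomputable def zeroNorm {n : ℕ} (w : Fin n → ℝ) : ℕ := Set.ncard {i | w i ≠ 0}

open Finset

/-- The paper's `d_i(w)`: how much `(· - t) ^ 2` drops when `0` is replaced by `projInt l u t`. -/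
noncomputable def projGain (l u t : ℝ) : ℝ := t ^ 2 - (projInt l u t - t) ^ 2

lemma projInt_mem_Icc {l u : ℝ} (h : l ≤ u) (t : ℝ) : projInt l u t ∈ Set.Icc l u :=
  ⟨le_max_left _ _, max_le h (min_le_right _ _)⟩

lemma sq_sub_projInt_add_sq_le {l u s : ℝ} (hs : s ∈ Set.Icc l u) (t : ℝ) :
    (projInt l u t - t) ^ 2 + (s - projInt l u t) ^ 2 ≤ (s - t) ^ 2 := by
  obtain ⟨hl, hu⟩ := hs
  unfold projInt
  rcases le_total t l with htl | hlt
  · rw [min_eq_left (htl.trans (hl.trans hu)), max_eq_left htl]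
    nlinarith
  rcases le_total t u with htu | hut
  · rw [min_eq_left htu, max_eq_right hlt]
    nlinarith
  · rw [min_eq_right hut, max_eq_right (hl.trans hu)]
    nlinarith

theorem Finset.sum_le_sum_of_card_eq_of_forall_le {ι M : Type*} [AddCommMonoid M] [LinearOrder M]
    [IsOrderedAddMonoid M] {s t : Finset ι} (f : ι → M) (hst : #s = #t)
    (h : ∀ i ∈ s, ∀ j ∈ t, f i ≤ f j) : ∑ i ∈ s, f i ≤ ∑ j ∈ t, f j := by
  rcases t.eq_empty_or_nonempty with rfl | ht
  · simp_all
  obtain ⟨j₀, hj₀, hmin⟩ := t.exists_min_image f ht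
  calc ∑ i ∈ s, f i ≤ #s • f j₀ := sum_le_card_nsmul _ _ _ fun i hi => h i hi j₀ hj₀
    _ = #t • f j₀ := by rw [hst]
    _ ≤ ∑ j ∈ t, f j := card_nsmul_le_sum _ _ _ hmin

theorem Finset.sum_le_sum_of_card_eq_of_forall_notMem_le {ι M : Type*} [DecidableEq ι]
    [AddCommMonoid M] [LinearOrder M] [IsOrderedAddMonoid M] {s t : Finset ι} (f : ι → M)
    (hst : #s = #t) (h : ∀ i ∈ t, ∀ j ∉ t, f j ≤ f i) : ∑ i ∈ s, f i ≤ ∑ j ∈ t, f j := by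
  rw [← sum_inter_add_sum_sdiff s t, ← sum_inter_add_sum_sdiff t s, inter_comm]
  exact add_le_add_right (sum_le_sum_of_card_eq_of_forall_le f (card_sdiff_comm hst)
    fun i hi j hj => h j (mem_sdiff.1 hj).1 i (mem_sdiff.1 hi).2) _

section SparseProjection

variable {ι : Type*} [DecidableEq ι] (l u w : ι → ℝ)

/-- The paper's `p^I(w)`. -/
noncomputable def sparseProj (I : Finset ι) (i : ι) : ℝ :=
  if i ∈ I then projInt (l i) (u i) (w i) else 0

variable {l u w}

lemma sparseProj_mem_Icc (h0 : ∀ i, l i ≤ 0 ∧ 0 ≤ u i) (I : Finset ι) (i : ι) :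
    sparseProj l u w I i ∈ Set.Icc (l i) (u i) := by
  unfold sparseProj
  split_ifs
  · exact projInt_mem_Icc ((h0 i).1.trans (h0 i).2) _
  · exact h0 i

variable [Fintype ι]

lemma sum_sq_sub_sparseProj (I : Finset ι) :
    ∑ i, (sparseProj l u w I i - w i) ^ 2 =
      ∑ i, w i ^ 2 - ∑ i ∈ I, projGain (l i) (u i) (w i) := by
  rw [eq_sub_iff_add_eq, ← sum_ite_mem_eq I, ← sum_add_distrib]
  refine sum_congr rfl fun i _ => ?_
  unfold sparseProj projGain
  split_ifs <;> ring

lemma sum_sq_sub_sparseProj_add_le {z : ι → ℝ} (hz : ∀ i, z i ∈ Set.Icc (l i) (u i))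
    {J : Finset ι} (hzJ : ∀ i, z i ≠ 0 → i ∈ J) :
    ∑ i, (sparseProj l u w J i - w i) ^ 2 + ∑ i, (z i - sparseProj l u w J i) ^ 2 ≤
      ∑ i, (z i - w i) ^ 2 := by
  rw [← sum_add_distrib]
  refine sum_le_sum fun i _ => ?_
  unfold sparseProj
  split_ifs with hi
  · exact sq_sub_projInt_add_sq_le (hz i) _
  · rw [not_imp_comm.1 (hzJ i) hi]
    simp

lemma eq_sparseProj_of_sum_sq_sub_le {y : ι → ℝ} (hy : ∀ i, y i ∈ Set.Icc (l i) (u i))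
    {J : Finset ι} (hyJ : ∀ i, y i ≠ 0 → i ∈ J)
    (hopt : ∑ i, (y i - w i) ^ 2 ≤ ∑ i, (sparseProj l u w J i - w i) ^ 2) :
    y = sparseProj l u w J := by
  have hzero : ∑ i, (y i - sparseProj l u w J i) ^ 2 = 0 :=
    le_antisymm (by linarith [sum_sq_sub_sparseProj_add_le (w := w) hy hyJ])
      (sum_nonneg fun i _ => sq_nonneg _)
  funext i
  rw [sum_eq_zero_iff_of_nonneg fun i _ => sq_nonneg _] at hzero
  exact sub_eq_zero.1 (pow_eq_zero_iff two_ne_zero |>.1 (hzero i (mem_univ i)))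

lemma projGain_le_of_sum_sq_sub_le {y : ι → ℝ} (hy : ∀ i, y i ∈ Set.Icc (l i) (u i))
    {J : Finset ι} (hyJ : ∀ i, y i ≠ 0 → i ∈ J) {i j : ι} (hi : i ∈ J) (hj : j ∉ J)
    (hopt : ∑ k, (y k - w k) ^ 2 ≤
      ∑ k, (sparseProj l u w (insert j (J.erase i)) k - w k) ^ 2) :
    projGain (l j) (u j) (w j) ≤ projGain (l i) (u i) (w i) := by
  have hlower := sum_sq_sub_sparseProj_add_le (w := w) hy hyJ
  have hsq : 0 ≤ ∑ k, (y k - sparseProj l u w J k) ^ 2 := sum_nonneg fun k _ => sq_nonneg _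
  rw [sum_sq_sub_sparseProj] at hlower hopt
  rw [sum_insert fun h => hj (mem_of_mem_erase h)] at hopt
  rw [← add_sum_erase J _ hi] at hlower
  linarith

end SparseProjection

lemma zeroNorm_le_card {n : ℕ} {z : Fin n → ℝ} {J : Finset (Fin n)} (hzJ : ∀ i, z i ≠ 0 → i ∈ J) :
    zeroNorm z ≤ #J :=
  (Set.ncard_le_ncard hzJ J.finite_toSet).trans_eq (Set.ncard_coe_finset J)

lemma exists_card_eq_of_zeroNorm_le {n κ : ℕ} (hκ : κ ≤ n) {z : Fin n → ℝ}
    (hz : zeroNorm z ≤ κ) : ∃ J : Finset (Fin n), #J = κ ∧ ∀ i, z i ≠ 0 → i ∈ J := by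
  obtain ⟨J, hzJ, -, hJ⟩ := Set.exists_subsuperset_card_eq (Set.subset_univ _) hz
    (by rwa [Set.ncard_univ, Nat.card_fin])
  lift J to Finset (Fin n) using J.toFinite
  exact ⟨J, by rwa [Set.ncard_coe_finset] at hJ, fun i hi => hzJ hi⟩

lemma EuclideanSpace.norm_sub_le_norm_sub_iff {ι : Type*} [Fintype ι]
    (x y w : EuclideanSpace ℝ ι) :
    ‖x - w‖ ≤ ‖y - w‖ ↔ ∑ i, (x i - w i) ^ 2 ≤ ∑ i, (y i - w i) ^ 2 := by
  rw [← sq_le_sq₀ (norm_nonneg _) (norm_nonneg _), EuclideanSpace.real_norm_sq_eq,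
    EuclideanSpace.real_norm_sq_eq]
  simp only [PiLp.sub_apply]

theorem stmt_5_general {n : ℕ} (κ : ℕ) (hκn : κ ≤ n - 1)
    (l u : Fin n → ℝ) (h0 : ∀ i, l i ≤ 0 ∧ 0 ≤ u i)
    (w y : EuclideanSpace ℝ (Fin n))
    (d : Fin n → ℝ)
    (hd : ∀ i, d i = (w i) ^ 2 - (projInt (l i) (u i) (w i) - w i) ^ 2) :
    ((zeroNorm (y : Fin n → ℝ) ≤ κ ∧ ∀ i, l i ≤ y i ∧ y i ≤ u i) ∧
      ∀ z : EuclideanSpace ℝ (Fin n),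
        (zeroNorm (z : Fin n → ℝ) ≤ κ ∧ ∀ i, l i ≤ z i ∧ z i ≤ u i) →
          ‖y - w‖ ≤ ‖z - w‖) ↔
    ∃ I : Finset (Fin n), I.card = κ ∧
      (∀ i ∈ I, ∀ j ∉ I, d j ≤ d i) ∧
      (∀ i, y i = if i ∈ I then projInt (l i) (u i) (w i) else 0) := by
  obtain rfl : d = fun i => projGain (l i) (u i) (w i) := funext hd
  have hκ : κ ≤ n := hκn.trans (n.sub_le 1)
  have hfeas : ∀ I : Finset (Fin n), #I = κ →
      zeroNorm (sparseProj l u w I) ≤ κ ∧ ∀ i, sparseProj l u w I i ∈ Set.Icc (l i) (u i) :=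
    fun I hI => ⟨hI ▸ zeroNorm_le_card fun i hi => by_contra fun h => hi (if_neg h),
      sparseProj_mem_Icc h0 I⟩
  simp only [EuclideanSpace.norm_sub_le_norm_sub_iff]
  constructor
  · rintro ⟨⟨hy0, hy⟩, hmin⟩
    obtain ⟨J, hJ, hyJ⟩ := exists_card_eq_of_zeroNorm_le hκ hy0
    have hopt : ∀ I : Finset (Fin n), #I = κ →
        ∑ i, (y i - w i) ^ 2 ≤ ∑ i, (sparseProj l u w I i - w i) ^ 2 :=
      fun I hI => hmin (WithLp.toLp 2 (sparseProj l u w I)) (hfeas I hI)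
    refine ⟨J, hJ, fun i hi j hj => projGain_le_of_sum_sq_sub_le hy hyJ hi hj (hopt _ ?_),
      congrFun (eq_sparseProj_of_sum_sq_sub_le hy hyJ (hopt J hJ))⟩
    rw [card_insert_of_notMem fun h => hj (mem_of_mem_erase h), card_erase_add_one hi, hJ]
  · rintro ⟨I, hI, hImax, hyI⟩
    obtain rfl : y = WithLp.toLp 2 (sparseProj l u w I) := PiLp.ext hyI
    refine ⟨hfeas I hI, fun z ⟨hz0, hz⟩ => ?_⟩
    obtain ⟨J, hJ, hzJ⟩ := exists_card_eq_of_zeroNorm_le hκ hz0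
    calc ∑ i, (sparseProj l u w I i - w i) ^ 2
        ≤ ∑ i, (sparseProj l u w J i - w i) ^ 2 := by
          simp only [sum_sq_sub_sparseProj]
          exact sub_le_sub_left
            (sum_le_sum_of_card_eq_of_forall_notMem_le _ (hJ.trans hI.symm) hImax) _
      _ ≤ ∑ i, (z i - w i) ^ 2 :=
          le_of_add_le_of_nonneg_left (sum_sq_sub_sparseProj_add_le hz hzJ)
            (sum_nonneg fun i _ => sq_nonneg _)

theorem stmt_5 {n : ℕ} (κ : ℕ) (hκ1 : 1 ≤ κ) (hκn : κ ≤ n - 1)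
    (l u : Fin n → ℝ) (hlu : ∀ i, l i < u i) (h0 : ∀ i, l i ≤ 0 ∧ 0 ≤ u i)
    (w y : EuclideanSpace ℝ (Fin n))
    (d : Fin n → ℝ)
    (hd : ∀ i, d i = (w i) ^ 2 - (projInt (l i) (u i) (w i) - w i) ^ 2) :
    ((zeroNorm (y : Fin n → ℝ) ≤ κ ∧ ∀ i, l i ≤ y i ∧ y i ≤ u i) ∧
      ∀ z : EuclideanSpace ℝ (Fin n),
        (zeroNorm (z : Fin n → ℝ) ≤ κ ∧ ∀ i, l i ≤ z i ∧ z i ≤ u i) →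
          ‖y - w‖ ≤ ‖z - w‖) ↔
    ∃ I : Finset (Fin n), I.card = κ ∧
      (∀ i ∈ I, ∀ j ∉ I, d j ≤ d i) ∧
      (∀ i, y i = if i ∈ I then projInt (l i) (u i) (w i) else 0) :=
  stmt_5_general κ hκn l u h0 w y d hd
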